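/- Let 0 < α < 1, β > 0, α + 1/β ≥ 1. The Hardy operator H_{α,β}f(s) = ∫_{s^β}^1 f(r) r^{α−1} dr is bounded from L^1(0,1) to L^q(0,1), where q = 1/(β(1−α)). -/

import Mathlib

open scoped ENNReal
open MeasureTheory

private lemma hardy_aux_rpow {q : ℝ} (hq : 1 ≤ q) {x : ℝ≥0∞} (hx : x ≠ ⊤) :
    x ^ (q - 1) * x = x ^ q := by
  rcases eq_or_ne x 0 with rfl | hx0
  · rw [mul_zero, ENNReal.zero_rpow_of_pos (by linarith)]
  · calc x ^ (q - 1) * x = x ^ (q - 1) * x ^ (1 : ℝ) := by rw [ENNReal.rpow_one]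
      _ = x ^ (q - 1 + 1) := (ENNReal.rpow_add _ _ hx0 hx).symm
      _ = x ^ q := by ring_nf

private lemma hardy_aux_J {t c : ℝ} (ht : 0 < t) (hc : -1 < c) :
    ∫⁻ s in Set.Ioo (0 : ℝ) t, ENNReal.ofReal (s ^ c) =
      ENNReal.ofReal (t ^ (c + 1) / (c + 1)) := by
  rw [Measure.restrict_congr_set Ioo_ae_eq_Ioc,
    ← ofReal_integral_eq_lintegral_ofReal]
  · rw [← intervalIntegral.integral_of_le ht.le, integral_rpow (Or.inl hc),
      Real.zero_rpow (by linarith), sub_zero]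
  · exact ((intervalIntegral.intervalIntegrable_rpow' hc).1).mono_set (by rfl)
  · filter_upwards [ae_restrict_mem measurableSet_Ioc] with s hs
    exact Real.rpow_nonneg hs.1.le _

/-- the Hardy operator `H_{α,β} f(s) = ∫_{s^β}^1 f(r) r^{α−1} dr` is
bounded from `L¹(0,1)` to `L^q(0,1)` with `q = 1/(β(1−α))`. -/
theorem hardy_L1_to_Lq (α β : ℝ) (hα : α ∈ Set.Ioo (0 : ℝ) 1) (hβ : 0 < β)
    (hαβ : 1 ≤ α + 1 / β) :
    ∃ C > (0 : ℝ), ∀ f : ℝ → ℝ,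
      (∀ r ∈ Set.Ioo (0 : ℝ) 1, 0 ≤ f r) →
      IntegrableOn f (Set.Ioo 0 1) →
      eLpNorm (fun s => ∫ r in Set.Ioo (s ^ β) 1, f r * r ^ (α - 1))
          (ENNReal.ofReal (1 / (β * (1 - α)))) (volume.restrict (Set.Ioo (0 : ℝ) 1)) ≤
        ENNReal.ofReal C *
          eLpNorm f 1 (volume.restrict (Set.Ioo (0 : ℝ) 1)) := by
  obtain ⟨hα0, hα1⟩ := hα
  have hβ' : (0:ℝ) < 1 / β := by positivity
  have hb0 : 0 < β * (1 - α) := by nlinarith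
  set q : ℝ := 1 / (β * (1 - α)) with hqdef
  have hq1 : 1 ≤ q := by
    rw [hqdef, le_div_iff₀ hb0]
    have h1 : 1 - α ≤ 1 / β := by linarith
    calc 1 * (β * (1 - α)) = β * (1 - α) := by ring
      _ ≤ β * (1 / β) := by nlinarith
      _ = 1 := by field_simp
  have hq0 : 0 < q := lt_of_lt_of_le one_pos hq1
  refine ⟨q, hq0, ?_⟩
  intro f hf hfi
  set μ01 : Measure ℝ := volume.restrict (Set.Ioo (0:ℝ) 1) with hμ01
  -- measurable representative of f
  have hfm := hfi.aestronglyMeasurable.aemeasurable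
  set g : ℝ → ℝ := hfm.mk f with hgdef
  have hgm : Measurable g := hfm.measurable_mk
  have hfg : f =ᵐ[μ01] g := hfm.ae_eq_mk
  set F : ℝ → ℝ≥0∞ := fun r => ENNReal.ofReal (g r) * ENNReal.ofReal (r ^ (α - 1)) with hF
  have hFm : Measurable F :=
    (hgm.ennreal_ofReal).mul ((measurable_id.pow measurable_const).ennreal_ofReal)
  set I : ℝ≥0∞ := ∫⁻ r in Set.Ioo (0:ℝ) 1, ENNReal.ofReal (g r) with hIdef
  -- I is the L¹ norm of f and it is finite
  have hIeq : I = eLpNorm f 1 μ01 := by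
    rw [eLpNorm_one_eq_lintegral_enorm, hIdef]
    refine lintegral_congr_ae ?_
    filter_upwards [hfg, ae_restrict_mem measurableSet_Ioo] with r hr hr'
    rw [← hr, Real.enorm_eq_ofReal (hf r hr')]
  have hItop : I ≠ ⊤ := by
    rw [hIeq, eLpNorm_one_eq_lintegral_enorm]
    exact hfi.2.ne
  -- The kernel
  set K : ℝ × ℝ → ℝ≥0∞ :=
    fun z => Set.indicator {z : ℝ × ℝ | z.1 ^ β < z.2} (fun z => F z.2) z with hK
  have hsetm : MeasurableSet {z : ℝ × ℝ | z.1 ^ β < z.2} :=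
    measurableSet_lt (measurable_fst.pow measurable_const) measurable_snd
  have hKm : Measurable K := (hFm.comp measurable_snd).indicator hsetm
  set G : ℝ → ℝ≥0∞ := fun s => ∫⁻ r in Set.Ioo (0:ℝ) 1, K (s, r) with hG
  have hGm : Measurable G :=
    Measurable.lintegral_prod_right (f := fun s r => K (s, r)) hKm
  -- rewrite G as integral over Ioo (s^β) 1
  have hGeq : ∀ s ∈ Set.Ioo (0:ℝ) 1, G s = ∫⁻ r in Set.Ioo (s ^ β) 1, F r := by
    intro s hs
    have hsb : 0 < s ^ β := Real.rpow_pos_of_pos hs.1 β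
    have h1 : ∀ r : ℝ, K (s, r) = Set.indicator (Set.Ioi (s ^ β)) F r := fun r => rfl
    have h2 : G s = ∫⁻ r in Set.Ioo (0:ℝ) 1, Set.indicator (Set.Ioi (s ^ β)) F r :=
      lintegral_congr fun r => h1 r
    have h3 : Set.Ioi (s ^ β) ∩ Set.Ioo (0:ℝ) 1 = Set.Ioo (s ^ β) 1 := by
      ext r
      simp only [Set.mem_inter_iff, Set.mem_Ioi, Set.mem_Ioo]
      constructor
      · rintro ⟨ha, _, hc⟩; exact ⟨ha, hc⟩
      · rintro ⟨ha, hb⟩; exact ⟨ha, lt_trans hsb ha, hb⟩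
    rw [h2, lintegral_indicator measurableSet_Ioi, Measure.restrict_restrict measurableSet_Ioi,
      h3]
  -- Claim B : pointwise bound on G
  have hGB : ∀ s ∈ Set.Ioo (0:ℝ) 1, G s ≤ ENNReal.ofReal (s ^ (β * (α - 1))) * I := by
    intro s hs
    have hsb : 0 < s ^ β := Real.rpow_pos_of_pos hs.1 β
    rw [hGeq s hs]
    have hmono : ∀ r ∈ Set.Ioo (s ^ β) 1,
        F r ≤ ENNReal.ofReal (g r) * ENNReal.ofReal (s ^ (β * (α - 1))) := by
      intro r hr
      refine mul_le_mul_right (ENNReal.ofReal_le_ofReal ?_) _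
      rw [Real.rpow_mul hs.1.le]
      exact Real.rpow_le_rpow_of_nonpos hsb hr.1.le (by linarith)
    calc ∫⁻ r in Set.Ioo (s ^ β) 1, F r
        ≤ ∫⁻ r in Set.Ioo (s ^ β) 1,
            ENNReal.ofReal (g r) * ENNReal.ofReal (s ^ (β * (α - 1))) :=
          setLIntegral_mono (hgm.ennreal_ofReal.mul measurable_const) hmono
      _ = (∫⁻ r in Set.Ioo (s ^ β) 1, ENNReal.ofReal (g r)) *
            ENNReal.ofReal (s ^ (β * (α - 1))) :=
          lintegral_mul_const' _ _ ENNReal.ofReal_ne_top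
      _ ≤ I * ENNReal.ofReal (s ^ (β * (α - 1))) := by
          refine mul_le_mul_left (lintegral_mono_set ?_) _
          intro r hr
          exact ⟨lt_trans hsb hr.1, hr.2⟩
      _ = ENNReal.ofReal (s ^ (β * (α - 1))) * I := mul_comm _ _
  have hGtop : ∀ s ∈ Set.Ioo (0:ℝ) 1, G s ≠ ⊤ := by
    intro s hs
    exact ne_top_of_le_ne_top (ENNReal.mul_ne_top ENNReal.ofReal_ne_top hItop) (hGB s hs)
  -- arithmetic
  have hbq : β * (1 - α) * q = 1 := by
    rw [hqdef]; field_simp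
  have hcc : β * (α - 1) * (q - 1) = β * (1 - α) - 1 := by nlinarith [hbq]
  -- Claim C : Tonelli computation
  have hT : ∫⁻ s in Set.Ioo (0:ℝ) 1, ENNReal.ofReal (s ^ (β * (1 - α) - 1)) * G s
      = ENNReal.ofReal q * I := by
    have hswap :
        ∫⁻ s in Set.Ioo (0:ℝ) 1, ∫⁻ r in Set.Ioo (0:ℝ) 1,
            ENNReal.ofReal (s ^ (β * (1 - α) - 1)) * K (s, r)
          = ∫⁻ r in Set.Ioo (0:ℝ) 1, ∫⁻ s in Set.Ioo (0:ℝ) 1,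
            ENNReal.ofReal (s ^ (β * (1 - α) - 1)) * K (s, r) := by
      refine lintegral_lintegral_swap ?_
      exact (((measurable_fst.pow measurable_const).ennreal_ofReal).mul hKm).aemeasurable
    calc ∫⁻ s in Set.Ioo (0:ℝ) 1, ENNReal.ofReal (s ^ (β * (1 - α) - 1)) * G s
        = ∫⁻ s in Set.Ioo (0:ℝ) 1, ∫⁻ r in Set.Ioo (0:ℝ) 1,
            ENNReal.ofReal (s ^ (β * (1 - α) - 1)) * K (s, r) := by
          refine lintegral_congr fun s => ?_
          rw [hG, lintegral_const_mul' _ _ ENNReal.ofReal_ne_top]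
      _ = ∫⁻ r in Set.Ioo (0:ℝ) 1, ∫⁻ s in Set.Ioo (0:ℝ) 1,
            ENNReal.ofReal (s ^ (β * (1 - α) - 1)) * K (s, r) := hswap
      _ = ∫⁻ r in Set.Ioo (0:ℝ) 1, ENNReal.ofReal q * ENNReal.ofReal (g r) := by
          refine setLIntegral_congr_fun measurableSet_Ioo (fun r hr => ?_)
          have hr0 : 0 < r := hr.1
          have hr1 : r < 1 := hr.2
          set t : ℝ := r ^ (1 / β) with htdef
          have ht0 : 0 < t := Real.rpow_pos_of_pos hr0 _
          have ht1 : t < 1 := Real.rpow_lt_one hr0.le hr1 hβ'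
          have htβ : t ^ β = r := by
            rw [htdef, ← Real.rpow_mul hr0.le]
            field_simp
            simp
          have hind : ∀ s : ℝ, ENNReal.ofReal (s ^ (β * (1 - α) - 1)) * K (s, r)
              = Set.indicator {s : ℝ | s ^ β < r}
                  (fun s => ENNReal.ofReal (s ^ (β * (1 - α) - 1)) * F r) s := by
            intro s
            by_cases h : s ^ β < r
            · simp [hK, Set.indicator_apply, h]
            · simp [hK, Set.indicator_apply, h]
          have hsetm' : MeasurableSet {s : ℝ | s ^ β < r} :=
            measurableSet_lt (measurable_id.pow measurable_const) measurable_const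
          have hseteq : {s : ℝ | s ^ β < r} ∩ Set.Ioo (0:ℝ) 1 = Set.Ioo 0 t := by
            ext s
            simp only [Set.mem_inter_iff, Set.mem_setOf_eq, Set.mem_Ioo]
            constructor
            · rintro ⟨h1, h2, h3⟩
              refine ⟨h2, ?_⟩
              rw [← htβ] at h1
              exact (Real.rpow_lt_rpow_iff h2.le ht0.le hβ).1 h1
            · rintro ⟨h1, h2⟩
              refine ⟨?_, h1, lt_trans h2 ht1⟩
              rw [← htβ]
              exact (Real.rpow_lt_rpow_iff h1.le ht0.le hβ).2 h2
          calc ∫⁻ s in Set.Ioo (0:ℝ) 1, ENNReal.ofReal (s ^ (β * (1 - α) - 1)) * K (s, r)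
              = ∫⁻ s in Set.Ioo (0:ℝ) 1, Set.indicator {s : ℝ | s ^ β < r}
                  (fun s => ENNReal.ofReal (s ^ (β * (1 - α) - 1)) * F r) s := by
                simp only [hind]
            _ = ∫⁻ s in {s : ℝ | s ^ β < r} ∩ Set.Ioo (0:ℝ) 1,
                  ENNReal.ofReal (s ^ (β * (1 - α) - 1)) * F r := by
                rw [lintegral_indicator hsetm', Measure.restrict_restrict hsetm']
            _ = (∫⁻ s in Set.Ioo (0:ℝ) t, ENNReal.ofReal (s ^ (β * (1 - α) - 1))) * F r := by
                rw [hseteq, lintegral_mul_const' _ _ ?_]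
                exact ENNReal.mul_ne_top ENNReal.ofReal_ne_top ENNReal.ofReal_ne_top
            _ = ENNReal.ofReal (t ^ (β * (1 - α)) / (β * (1 - α))) * F r := by
                rw [hardy_aux_J ht0 (by linarith)]
                ring_nf
            _ = ENNReal.ofReal q * ENNReal.ofReal (g r) := by
                have htb : t ^ (β * (1 - α)) = r ^ (1 - α) := by
                  rw [htdef, ← Real.rpow_mul hr0.le]
                  congr 1
                  field_simp
                rw [htb, div_eq_mul_one_div, ENNReal.ofReal_mul' (by positivity), hF]
                rw [← hqdef]
                have : ENNReal.ofReal (r ^ (1 - α)) * ENNReal.ofReal (r ^ (α - 1)) = 1 := by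
                  rw [← ENNReal.ofReal_mul (by positivity), ← Real.rpow_add hr0]
                  norm_num
                calc ENNReal.ofReal (r ^ (1 - α)) * ENNReal.ofReal q *
                      (ENNReal.ofReal (g r) * ENNReal.ofReal (r ^ (α - 1)))
                    = (ENNReal.ofReal (r ^ (1 - α)) * ENNReal.ofReal (r ^ (α - 1))) *
                      (ENNReal.ofReal q * ENNReal.ofReal (g r)) := by ring
                  _ = ENNReal.ofReal q * ENNReal.ofReal (g r) := by rw [this, one_mul]
      _ = ENNReal.ofReal q * I := by
          rw [hIdef, lintegral_const_mul' _ _ ENNReal.ofReal_ne_top]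
  -- Claim D : main estimate
  have hD : ∫⁻ s in Set.Ioo (0:ℝ) 1, (G s) ^ q ≤ ENNReal.ofReal q * I ^ q := by
    calc ∫⁻ s in Set.Ioo (0:ℝ) 1, (G s) ^ q
        = ∫⁻ s in Set.Ioo (0:ℝ) 1, (G s) ^ (q - 1) * G s := by
          refine setLIntegral_congr_fun measurableSet_Ioo (fun s hs => ?_)
          exact (hardy_aux_rpow hq1 (hGtop s hs)).symm
      _ ≤ ∫⁻ s in Set.Ioo (0:ℝ) 1,
            (ENNReal.ofReal (s ^ (β * (α - 1))) * I) ^ (q - 1) * G s := by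
          refine setLIntegral_mono ?_ fun s hs => ?_
          · exact ((((measurable_id.pow measurable_const).ennreal_ofReal).mul
              measurable_const).pow measurable_const).mul hGm
          · exact mul_le_mul_left (ENNReal.rpow_le_rpow (hGB s hs) (by linarith)) _
      _ = ∫⁻ s in Set.Ioo (0:ℝ) 1,
            I ^ (q - 1) * (ENNReal.ofReal (s ^ (β * (1 - α) - 1)) * G s) := by
          refine setLIntegral_congr_fun measurableSet_Ioo (fun s hs => ?_)
          rw [ENNReal.mul_rpow_of_nonneg _ _ (by linarith),
            ENNReal.ofReal_rpow_of_pos (Real.rpow_pos_of_pos hs.1 _),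
            ← Real.rpow_mul hs.1.le, hcc]
          ring
      _ = I ^ (q - 1) * (ENNReal.ofReal q * I) := by
          rw [lintegral_const_mul' _ _ (ENNReal.rpow_ne_top_of_nonneg (by linarith) hItop), hT]
      _ = ENNReal.ofReal q * (I ^ (q - 1) * I) := by ring
      _ = ENNReal.ofReal q * I ^ q := by rw [hardy_aux_rpow hq1 hItop]
  -- Claim A : pointwise domination of the Hardy operator by G
  have hA : ∀ s ∈ Set.Ioo (0:ℝ) 1,
      (‖∫ r in Set.Ioo (s ^ β) 1, f r * r ^ (α - 1)‖₊ : ℝ≥0∞) ≤ G s := by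
    intro s hs
    have hsb : 0 < s ^ β := Real.rpow_pos_of_pos hs.1 β
    have hsub : Set.Ioo (s ^ β) 1 ⊆ Set.Ioo (0:ℝ) 1 :=
      fun r hr => ⟨lt_trans hsb hr.1, hr.2⟩
    have hnn : ∀ r ∈ Set.Ioo (s ^ β) 1, 0 ≤ f r * r ^ (α - 1) := fun r hr =>
      mul_nonneg (hf r (hsub hr)) (Real.rpow_nonneg (le_of_lt (lt_trans hsb hr.1)) _)
    have hpos : 0 ≤ ∫ r in Set.Ioo (s ^ β) 1, f r * r ^ (α - 1) :=
      setIntegral_nonneg measurableSet_Ioo hnn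
    rw [← enorm_eq_nnnorm, Real.enorm_eq_ofReal hpos, hGeq s hs]
    by_cases hint : IntegrableOn (fun r => f r * r ^ (α - 1)) (Set.Ioo (s ^ β) 1) volume
    · rw [ofReal_integral_eq_lintegral_ofReal hint ?_]
      · refine le_of_eq (lintegral_congr_ae ?_)
        filter_upwards [ae_restrict_of_ae_restrict_of_subset hsub hfg,
          ae_restrict_mem measurableSet_Ioo] with r hr hr'
        rw [ENNReal.ofReal_mul' (Real.rpow_nonneg (le_of_lt (lt_trans hsb hr'.1)) _), hr, hF]
      · filter_upwards [ae_restrict_mem measurableSet_Ioo] with r hr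
        exact hnn r hr
    · rw [integral_undef hint]
      simp
  -- put everything together
  have hpne0 : (ENNReal.ofReal (1 / (β * (1 - α)))) ≠ 0 := by
    rw [← hqdef]
    simp [ENNReal.ofReal_eq_zero, not_le, hq0]
  have hptop : (ENNReal.ofReal (1 / (β * (1 - α)))) ≠ ⊤ := ENNReal.ofReal_ne_top
  rw [eLpNorm_eq_lintegral_rpow_enorm_toReal hpne0 hptop, ← hqdef,
    ENNReal.toReal_ofReal hq0.le, ← hIeq]
  calc (∫⁻ s, (‖∫ r in Set.Ioo (s ^ β) 1, f r * r ^ (α - 1)‖₊ : ℝ≥0∞) ^ q ∂μ01) ^ (1 / q)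
      ≤ (∫⁻ s in Set.Ioo (0:ℝ) 1, (G s) ^ q) ^ (1 / q) := by
        refine ENNReal.rpow_le_rpow ?_ (by positivity)
        exact setLIntegral_mono (hGm.pow measurable_const)
          (fun s hs => ENNReal.rpow_le_rpow (hA s hs) hq0.le)
    _ ≤ (ENNReal.ofReal q * I ^ q) ^ (1 / q) := ENNReal.rpow_le_rpow hD (by positivity)
    _ = (ENNReal.ofReal q) ^ (1 / q) * I := by
        rw [ENNReal.mul_rpow_of_nonneg _ _ (by positivity), ← ENNReal.rpow_mul,
          mul_one_div_cancel hq0.ne', ENNReal.rpow_one]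
    _ ≤ ENNReal.ofReal q * I := by
        refine mul_le_mul_left ?_ _
        calc (ENNReal.ofReal q) ^ (1 / q) ≤ (ENNReal.ofReal q) ^ (1 : ℝ) :=
              ENNReal.rpow_le_rpow_of_exponent_le (ENNReal.one_le_ofReal.2 hq1)
                (by rw [div_le_one hq0]; exact hq1)
          _ = ENNReal.ofReal q := ENNReal.rpow_one _
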